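/- If X ∈ ℂ^{n,n} admits an H-polar decomposition X = UA with commuting factors, then there exists an H-unitary matrix V with X = V X^{[*]}; in particular X is H-normal (X X^{[*]} = X^{[*]} X) and ker X = ker X^{[*]}. -/

import Mathlib

/-!
For an H-unitary `U` we have `U^[*] = U⁻¹`, and `A` commutes with `U⁻¹` as it commutes with `U`;
so `X^[*] = A U^[*] = U⁻¹ A`. Hence `X = U² X^[*]`, `X` and `X^[*]` both lie in the commutative
algebra generated by `U`, `U⁻¹` and `A`, and they differ by an invertible left factor.
-/

open Matrix

namespace Matrix

variable {m R : Type*} [Fintype m] [DecidableEq m] [CommRing R]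

theorem commute_nonsing_inv_left {U A : Matrix m m R} (hU : IsUnit U.det) (h : Commute U A) :
    Commute U⁻¹ A := by
  lift U to (Matrix m m R)ˣ using (isUnit_iff_isUnit_det U).mpr hU
  rw [← coe_units_inv]
  exact h.units_inv_left

theorem mul_mulVec_eq_zero_iff {V Y : Matrix m m R} (hV : IsUnit V.det) (v : m → R) :
    (V * Y) *ᵥ v = 0 ↔ Y *ᵥ v = 0 := by
  rw [← mulVec_mulVec]
  refine ⟨fun h => ?_, fun h => by rw [h, mulVec_zero]⟩
  simpa [mulVec_mulVec, nonsing_inv_mul_cancel_left _ _ hV] using congrArg (V⁻¹ *ᵥ ·) h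

variable [StarRing R]

/-- The `H`-adjoint `X^[*]`. -/
noncomputable def hAdjoint (H X : Matrix m m R) : Matrix m m R := H⁻¹ * Xᴴ * H

variable {H : Matrix m m R}

theorem hAdjoint_mul (hH : IsUnit H.det) (X Y : Matrix m m R) :
    hAdjoint H (X * Y) = hAdjoint H Y * hAdjoint H X := by
  simp only [hAdjoint, conjTranspose_mul, Matrix.mul_assoc, mul_nonsing_inv_cancel_left _ _ hH]

theorem hAdjoint_mul_mul_eq_one (hH : IsUnit H.det) {U V : Matrix m m R}
    (hU : hAdjoint H U * U = 1) (hV : hAdjoint H V * V = 1) :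
    hAdjoint H (U * V) * (U * V) = 1 := by
  rw [hAdjoint_mul hH, Matrix.mul_assoc, ← Matrix.mul_assoc (hAdjoint H U), hU, Matrix.one_mul, hV]

theorem hAdjoint_mul_eq_inv_mul_of_commute (hH : IsUnit H.det) {U A : Matrix m m R}
    (hU : hAdjoint H U * U = 1) (hA : hAdjoint H A = A) (hUA : Commute U A) :
    hAdjoint H (U * A) = U⁻¹ * A := by
  rw [hAdjoint_mul hH, hA, ← inv_eq_left_inv hU]
  exact (commute_nonsing_inv_left (isUnit_det_of_left_inverse hU) hUA).symm.eq

end Matrix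

theorem hPolar_comm_implies_normal_general {n : ℕ}
    (H X U A : Matrix (Fin n) (Fin n) ℂ) (hdet : IsUnit H.det)
    (hU : H⁻¹ * Uᴴ * H * U = 1) (hA : H⁻¹ * Aᴴ * H = A) (hX : X = U * A)
    (hcomm : U * A = A * U) :
    (∃ V : Matrix (Fin n) (Fin n) ℂ,
        H⁻¹ * Vᴴ * H * V = 1 ∧ X = V * (H⁻¹ * Xᴴ * H)) ∧
      X * (H⁻¹ * Xᴴ * H) = (H⁻¹ * Xᴴ * H) * X ∧
      (∀ v : Fin n → ℂ, X *ᵥ v = 0 ↔ (H⁻¹ * Xᴴ * H) *ᵥ v = 0) := by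
  have hUdet : IsUnit U.det := isUnit_det_of_left_inverse hU
  have hUA : Commute U A := hcomm
  have hUinvA : Commute U⁻¹ A := commute_nonsing_inv_left hUdet hUA
  have hXadj : H⁻¹ * Xᴴ * H = U⁻¹ * A := hX ▸ hAdjoint_mul_eq_inv_mul_of_commute hdet hU hA hUA
  rw [hXadj, hX]
  refine ⟨⟨U * U, hAdjoint_mul_mul_eq_one hdet hU hU, ?_⟩, ?_, fun v => ?_⟩
  · rw [Matrix.mul_assoc, mul_nonsing_inv_cancel_left _ _ hUdet]
  · have hUUinv : Commute U U⁻¹ := (commute_nonsing_inv_left hUdet (Commute.refl U)).symm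
    exact ((hUUinv.mul_left hUinvA.symm).mul_right (hUA.mul_left (Commute.refl A))).eq
  · rw [mul_mulVec_eq_zero_iff hUdet, mul_mulVec_eq_zero_iff (isUnit_nonsing_inv_det _ hUdet)]

/-- If X has an H-polar decomposition with commuting factors, then X = V X^{[*]} for some
H-unitary V; in particular X is H-normal and ker X = ker X^{[*]}. -/
theorem hPolar_comm_implies_normal {n : ℕ}
    (H X U A : Matrix (Fin n) (Fin n) ℂ) (hH : H.IsHermitian) (hdet : IsUnit H.det)
    (hU : H⁻¹ * Uᴴ * H * U = 1) (hA : H⁻¹ * Aᴴ * H = A) (hX : X = U * A)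
    (hcomm : U * A = A * U) :
    (∃ V : Matrix (Fin n) (Fin n) ℂ,
        H⁻¹ * Vᴴ * H * V = 1 ∧ X = V * (H⁻¹ * Xᴴ * H)) ∧
      X * (H⁻¹ * Xᴴ * H) = (H⁻¹ * Xᴴ * H) * X ∧
      (∀ v : Fin n → ℂ, X *ᵥ v = 0 ↔ (H⁻¹ * Xᴴ * H) *ᵥ v = 0) :=
  hPolar_comm_implies_normal_general H X U A hdet hU hA hX hcomm
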